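/- Let p ∈ (0,1) and a > a_* := p^p·(1−p)^(1−p), and let β < α be the two positive roots of Q_{p,a}. Define η_{p,a}(x) := −(p+1)·a·x^(1−p) − (2−p)·a·x^(−1−p) + (1−p)²·(2p+1)·x^(p+1) + 2·(4p²−4p+1)·x^(p−1) + p²·(3−2p)·x^(p−3) and Υ_p(a) := ∫_β^α η_{p,a}(x)/√(Q_{p,a}(x)) dx (an absolutely convergent improper integral). Then Υ_p(a) < 0. Consequently, every closed p-elastic curve with non-constant curvature is unstable: the second variation of Θ_p in the unit normal direction equals 2m·Υ_p(a) < 0, where m is the number of curvature periods. -/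

import Mathlib

/-!
With `G(x) = −(p+1)·x^p + (2−p)·x^(p−2)` and
`R(x) = −p²(1−p)²·x^(p+1) + p(1−p)(2p²−2p−1)·x^(p−1) − p²(1−p)²·x^(p−3)`
one has the identity `η − R = G'·Q + G·Q'/2` for `x > 0`. Hence `(η − R)/√Q = (G·√Q)'`, and
`G·√Q` vanishes at both roots of `Q`, so `Υ_p(a) = ∫_β^α R/√Q`. Every coefficient of `R` is
negative for `p ∈ (0,1)`.

The integrals converge because both roots are simple: by the mean value theorem `Q'` is positive
somewhere left of any interior point and negative somewhere right of it, and `Q'` has the sign of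
the decreasing function `a − (1−p)·x^(2p)`. Where `|Q'| ≥ c > 0`, a bounded function divided by
`√Q` is dominated by a multiple of `|(√Q)'|`, which is integrable because `√Q` is monotone there.
-/

open Real Set MeasureTheory intervalIntegral

/-- The function `Q_{p,a}(x) = a·x^(2(1−p)) − (1−p)²·x² − p²`. -/
noncomputable def Qfun (p a x : ℝ) : ℝ :=
  a * x ^ (2 * (1 - p)) - (1 - p) ^ 2 * x ^ 2 - p ^ 2

/-- The integrand `η_{p,a}` of the second variation of the `p`-elastic energy in the unit
normal direction. -/
noncomputable def etafun (p a x : ℝ) : ℝ :=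
  -(p + 1) * a * x ^ (1 - p) - (2 - p) * a * x ^ (-1 - p)
    + (1 - p) ^ 2 * (2 * p + 1) * x ^ (p + 1)
    + 2 * (4 * p ^ 2 - 4 * p + 1) * x ^ (p - 1)
    + p ^ 2 * (3 - 2 * p) * x ^ (p - 3)

section SqrtSingularity

variable {f f' h : ℝ → ℝ} {a b : ℝ}

theorem intervalIntegrable_div_sqrt_of_deriv_pos (hab : a ≤ b)
    (hf : ∀ x ∈ Icc a b, HasDerivAt f (f' x) x) (hf' : ContinuousOn f' (Icc a b))
    (hf'pos : ∀ x ∈ Icc a b, 0 < f' x) (hfpos : ∀ x ∈ Ioo a b, 0 < f x)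
    (hh : ContinuousOn h (Icc a b)) :
    IntervalIntegrable (fun x => h x / √(f x)) volume a b := by
  obtain ⟨z, hz, hzmin⟩ := isCompact_Icc.exists_isMinOn (nonempty_Icc.2 hab) hf'
  obtain ⟨M, hM⟩ := isCompact_Icc.exists_bound_of_continuousOn hh
  have hM0 : 0 ≤ M := (norm_nonneg _).trans (hM a (left_mem_Icc.2 hab))
  have hf'z := hf'pos z hz
  have hfcont : ContinuousOn f (Icc a b) := fun x hx => (hf x hx).continuousAt.continuousWithinAt
  have hsqrt_deriv : ∀ x ∈ Ioo a b, HasDerivAt (fun y => √(f y)) (f' x / (2 * √(f x))) x :=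
    fun x hx => (hf x (Ioo_subset_Icc_self hx)).sqrt (hfpos x hx).ne'
  have hdom : IntegrableOn (fun x => 2 * M / f' z * (f' x / (2 * √(f x)))) (Ioo a b) :=
    ((integrableOn_deriv_of_nonneg hfcont.sqrt hsqrt_deriv fun x hx =>
      div_nonneg (hf'pos x (Ioo_subset_Icc_self hx)).le (by positivity)).mono_set
        Ioo_subset_Ioc_self).const_mul _
  rw [intervalIntegrable_iff_integrableOn_Ioo_of_le hab]
  refine hdom.mono' ?_ (ae_restrict_of_forall_mem measurableSet_Ioo fun x hx => ?_)
  · exact ((hh.mono Ioo_subset_Icc_self).div (hfcont.mono Ioo_subset_Icc_self).sqrt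
      fun y hy => (sqrt_pos.2 (hfpos y hy)).ne').aestronglyMeasurable measurableSet_Ioo
  · have hsqrt := sqrt_pos.2 (hfpos x hx)
    have hx' := Ioo_subset_Icc_self hx
    calc ‖h x / √(f x)‖ = ‖h x‖ / √(f x) := by rw [norm_div, norm_of_nonneg hsqrt.le]
      _ ≤ M / √(f x) := by gcongr; exact hM x hx'
      _ = 2 * M / f' z * (f' z / (2 * √(f x))) := by field_simp
      _ ≤ 2 * M / f' z * (f' x / (2 * √(f x))) := by gcongr; exact hzmin hx'

theorem intervalIntegrable_div_sqrt_of_deriv_neg (hab : a ≤ b)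
    (hf : ∀ x ∈ Icc a b, HasDerivAt f (f' x) x) (hf' : ContinuousOn f' (Icc a b))
    (hf'neg : ∀ x ∈ Icc a b, f' x < 0) (hfpos : ∀ x ∈ Ioo a b, 0 < f x)
    (hh : ContinuousOn h (Icc a b)) :
    IntervalIntegrable (fun x => h x / √(f x)) volume a b := by
  have hneg_Icc : ∀ x ∈ Icc (-b) (-a), -x ∈ Icc a b := fun x hx =>
    ⟨le_neg_of_le_neg hx.2, neg_le_of_neg_le hx.1⟩
  have hreflected := intervalIntegrable_div_sqrt_of_deriv_pos (f := fun x => f (-x))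
    (f' := fun x => -f' (-x)) (h := fun x => h (-x)) (neg_le_neg hab)
    (fun x hx =>
      ((hf (-x) (hneg_Icc x hx)).comp x (hasDerivAt_neg x)).congr_deriv (mul_neg_one _))
    (hf'.comp continuous_neg.continuousOn hneg_Icc).neg
    (fun x hx => neg_pos.2 (hf'neg (-x) (hneg_Icc x hx)))
    (fun x hx => hfpos (-x) ⟨lt_neg_of_lt_neg hx.2, neg_lt_of_neg_lt hx.1⟩)
    (hh.comp continuous_neg.continuousOn hneg_Icc)
  rw [IntervalIntegrable.iff_comp_neg]
  exact hreflected.symm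

end SqrtSingularity

section SimpleRoots

variable {p a : ℝ}

noncomputable def Qderiv (p a x : ℝ) : ℝ :=
  2 * (1 - p) * a * x ^ (1 - 2 * p) - 2 * (1 - p) ^ 2 * x

theorem hasDerivAt_Qfun {x : ℝ} (hx : 0 < x) : HasDerivAt (Qfun p a) (Qderiv p a x) x := by
  have hpow := hasDerivAt_rpow_const (p := 2 * (1 - p)) (Or.inl hx.ne')
  refine (((hpow.const_mul a).sub ((hasDerivAt_pow 2 x).const_mul ((1 - p) ^ 2))).sub_const
    (p ^ 2)).congr_deriv ?_
  rw [Qderiv, show 2 * (1 - p) - 1 = 1 - 2 * p by ring]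
  push_cast
  ring

theorem continuousOn_Qderiv : ContinuousOn (Qderiv p a) (Ioi 0) :=
  continuousOn_of_forall_continuousAt fun x hx => by
    unfold Qderiv; fun_prop (disch := exact Or.inl (ne_of_gt hx))

theorem Qderiv_eq_mul {x : ℝ} (hx : 0 < x) :
    Qderiv p a x = 2 * (1 - p) * x ^ (1 - 2 * p) * (a - (1 - p) * x ^ (2 * p)) := by
  have hpow : x ^ (1 - 2 * p) * x ^ (2 * p) = x := by
    rw [← rpow_add hx, sub_add_cancel, rpow_one]
  rw [Qderiv]
  linear_combination 2 * (1 - p) ^ 2 * hpow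

theorem Qderiv_pos_iff (hp : p < 1) {x : ℝ} (hx : 0 < x) :
    0 < Qderiv p a x ↔ (1 - p) * x ^ (2 * p) < a := by
  have hc : 0 < 2 * (1 - p) * x ^ (1 - 2 * p) :=
    mul_pos (mul_pos two_pos (sub_pos.2 hp)) (rpow_pos_of_pos hx _)
  rw [Qderiv_eq_mul hx, mul_pos_iff_of_pos_left hc, sub_pos]

theorem Qderiv_neg_iff (hp : p < 1) {x : ℝ} (hx : 0 < x) :
    Qderiv p a x < 0 ↔ a < (1 - p) * x ^ (2 * p) := by
  have hc : 0 < 2 * (1 - p) * x ^ (1 - 2 * p) :=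
    mul_pos (mul_pos two_pos (sub_pos.2 hp)) (rpow_pos_of_pos hx _)
  rw [Qderiv_eq_mul hx, ← neg_pos, ← mul_neg, mul_pos_iff_of_pos_left hc, neg_sub, sub_pos]

theorem Qderiv_pos_of_le (hp : p ∈ Ioo 0 1) {x y : ℝ} (hx : 0 < x) (hxy : x ≤ y)
    (hy : 0 < Qderiv p a y) : 0 < Qderiv p a x := by
  rw [Qderiv_pos_iff hp.2 (hx.trans_le hxy)] at hy
  rw [Qderiv_pos_iff hp.2 hx]
  have := rpow_le_rpow hx.le hxy (by linarith [hp.1] : 0 ≤ 2 * p)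
  nlinarith [hp.2]

theorem Qderiv_neg_of_le (hp : p ∈ Ioo 0 1) {x y : ℝ} (hx : 0 < x) (hxy : x ≤ y)
    (hx' : Qderiv p a x < 0) : Qderiv p a y < 0 := by
  rw [Qderiv_neg_iff hp.2 hx] at hx'
  rw [Qderiv_neg_iff hp.2 (hx.trans_le hxy)]
  have := rpow_le_rpow hx.le hxy (by linarith [hp.1] : 0 ≤ 2 * p)
  nlinarith [hp.2]

theorem intervalIntegrable_div_sqrt_Qfun (hp : p ∈ Ioo 0 1) {β α : ℝ} (hβ : 0 < β)
    (hβα : β < α) (hQβ : Qfun p a β = 0) (hQα : Qfun p a α = 0)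
    (hQpos : ∀ x ∈ Ioo β α, 0 < Qfun p a x) {h : ℝ → ℝ} (hh : ContinuousOn h (Icc β α)) :
    IntervalIntegrable (fun x => h x / √(Qfun p a x)) volume β α := by
  have hderiv : ∀ x ∈ Icc β α, HasDerivAt (Qfun p a) (Qderiv p a x) x :=
    fun x hx => hasDerivAt_Qfun (hβ.trans_le hx.1)
  have hQcont : ContinuousOn (Qfun p a) (Icc β α) :=
    fun x hx => (hderiv x hx).continuousAt.continuousWithinAt
  have hQ'cont : ContinuousOn (Qderiv p a) (Icc β α) :=
    continuousOn_Qderiv.mono fun x hx => hβ.trans_le hx.1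
  obtain ⟨m, hm⟩ := nonempty_Ioo.2 hβα
  obtain ⟨s, hs, hQ's⟩ := exists_hasDerivAt_eq_slope (Qfun p a) (Qderiv p a) hm.1
    (hQcont.mono (Icc_subset_Icc_right hm.2.le))
    fun x hx => hderiv x ⟨hx.1.le, hx.2.le.trans hm.2.le⟩
  obtain ⟨t, ht, hQ't⟩ := exists_hasDerivAt_eq_slope (Qfun p a) (Qderiv p a) hm.2
    (hQcont.mono (Icc_subset_Icc_left hm.1.le))
    fun x hx => hderiv x ⟨hm.1.le.trans hx.1.le, hx.2.le⟩
  have hQ's_pos : 0 < Qderiv p a s := by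
    rw [hQ's, hQβ]; exact div_pos (by linarith [hQpos m hm]) (sub_pos.2 hm.1)
  have hQ't_neg : Qderiv p a t < 0 := by
    rw [hQ't, hQα]; exact div_neg_of_neg_of_pos (by linarith [hQpos m hm]) (sub_pos.2 hm.2)
  have hsα : s < α := hs.2.trans hm.2
  have hβt : β < t := hm.1.trans ht.1
  have hst : s ≤ t := (hs.2.trans ht.1).le
  have near_β : IntervalIntegrable (fun x => h x / √(Qfun p a x)) volume β s :=
    intervalIntegrable_div_sqrt_of_deriv_pos hs.1.le
      (fun x hx => hderiv x ⟨hx.1, hx.2.trans hsα.le⟩)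
      (hQ'cont.mono (Icc_subset_Icc_right hsα.le))
      (fun x hx => Qderiv_pos_of_le hp (hβ.trans_le hx.1) hx.2 hQ's_pos)
      (fun x hx => hQpos x ⟨hx.1, hx.2.trans hsα⟩)
      (hh.mono (Icc_subset_Icc_right hsα.le))
  have middle : IntervalIntegrable (fun x => h x / √(Qfun p a x)) volume s t := by
    refine ContinuousOn.intervalIntegrable_of_Icc hst fun x hx => ?_
    have hx' : x ∈ Ioo β α := ⟨hs.1.trans_le hx.1, hx.2.trans_lt ht.2⟩
    exact (hh.mono (Icc_subset_Icc hs.1.le ht.2.le) x hx).div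
      (hQcont.mono (Icc_subset_Icc hs.1.le ht.2.le) x hx).sqrt (sqrt_pos.2 (hQpos x hx')).ne'
  have near_α : IntervalIntegrable (fun x => h x / √(Qfun p a x)) volume t α :=
    intervalIntegrable_div_sqrt_of_deriv_neg ht.2.le
      (fun x hx => hderiv x ⟨hβt.le.trans hx.1, hx.2⟩)
      (hQ'cont.mono (Icc_subset_Icc_left hβt.le))
      (fun x hx => Qderiv_neg_of_le hp (hβ.trans hβt) hx.1 hQ't_neg)
      (fun x hx => hQpos x ⟨hβt.trans hx.1, hx.2⟩)
      (hh.mono (Icc_subset_Icc_left hβt.le))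
  exact (near_β.trans middle).trans near_α

end SimpleRoots

section Antiderivative

variable {p a : ℝ}

noncomputable def Gfun (p x : ℝ) : ℝ := -(p + 1) * x ^ p + (2 - p) * x ^ (p - 2)

noncomputable def Gderiv (p x : ℝ) : ℝ :=
  -(p + 1) * p * x ^ (p - 1) + (2 - p) * (p - 2) * x ^ (p - 3)

noncomputable def Rfun (p x : ℝ) : ℝ :=
  -(p ^ 2 * (1 - p) ^ 2) * x ^ (p + 1) + p * (1 - p) * (2 * p ^ 2 - 2 * p - 1) * x ^ (p - 1)
    - p ^ 2 * (1 - p) ^ 2 * x ^ (p - 3)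

theorem hasDerivAt_Gfun {x : ℝ} (hx : 0 < x) : HasDerivAt (Gfun p) (Gderiv p x) x := by
  have h₁ := hasDerivAt_rpow_const (p := p) (Or.inl hx.ne')
  have h₂ := hasDerivAt_rpow_const (p := p - 2) (Or.inl hx.ne')
  refine ((h₁.const_mul (-(p + 1))).add (h₂.const_mul (2 - p))).congr_deriv ?_
  rw [Gderiv, show p - 2 - 1 = p - 3 by ring]
  ring

theorem etafun_sub_Rfun {x : ℝ} (hx : 0 < x) :
    etafun p a x - Rfun p x = Gderiv p x * Qfun p a x + Gfun p x * Qderiv p a x / 2 := by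
  set u := x ^ p
  have hu : 0 < u := rpow_pos_of_pos hx p
  have hsq : x ^ (2 : ℝ) = x ^ 2 := rpow_two x
  have hcube : x ^ (3 : ℝ) = x ^ 3 := by exact_mod_cast rpow_natCast x 3
  have e₁ : x ^ (p - 1) = u / x := by rw [rpow_sub hx, rpow_one]
  have e₂ : x ^ (p - 2) = u / x ^ 2 := by rw [rpow_sub hx, hsq]
  have e₃ : x ^ (p - 3) = u / x ^ 3 := by rw [rpow_sub hx, hcube]
  have e₄ : x ^ (p + 1) = u * x := by rw [rpow_add hx, rpow_one]
  have e₅ : x ^ (1 - p) = x / u := by rw [rpow_sub hx, rpow_one]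
  have e₆ : x ^ (-1 - p) = 1 / (x * u) := by
    rw [show -1 - p = -(1 + p) by ring, rpow_neg hx.le, rpow_add hx, rpow_one, one_div]
  have e₇ : x ^ (2 * (1 - p)) = x ^ 2 / (u * u) := by
    rw [show 2 * (1 - p) = 2 - (p + p) by ring, rpow_sub hx, rpow_add hx, hsq]
  have e₈ : x ^ (1 - 2 * p) = x / (u * u) := by
    rw [show 1 - 2 * p = 1 - (p + p) by ring, rpow_sub hx, rpow_add hx, rpow_one]
  simp only [Qfun, etafun, Qderiv, Gfun, Gderiv, Rfun]
  rw [e₁, e₂, e₃, e₄, e₅, e₆, e₇, e₈]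
  field_simp
  ring

theorem hasDerivAt_Gfun_mul_sqrt_Qfun {x : ℝ} (hx : 0 < x) (hQ : 0 < Qfun p a x) :
    HasDerivAt (fun y => Gfun p y * √(Qfun p a y))
      ((etafun p a x - Rfun p x) / √(Qfun p a x)) x := by
  refine ((hasDerivAt_Gfun hx).mul ((hasDerivAt_Qfun hx).sqrt hQ.ne')).congr_deriv ?_
  have hsqrt : √(Qfun p a x) ^ 2 = Qfun p a x := sq_sqrt hQ.le
  rw [etafun_sub_Rfun hx]
  field_simp
  rw [hsqrt]
  ring

theorem Rfun_neg (hp : p ∈ Ioo 0 1) {x : ℝ} (hx : 0 < x) : Rfun p x < 0 := by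
  obtain ⟨hp₀, hp₁⟩ := hp
  have hc : 0 < p ^ 2 * (1 - p) ^ 2 := mul_pos (pow_pos hp₀ 2) (pow_pos (sub_pos.2 hp₁) 2)
  have hc' : p * (1 - p) * (2 * p ^ 2 - 2 * p - 1) < 0 :=
    mul_neg_of_pos_of_neg (mul_pos hp₀ (by linarith)) (by nlinarith)
  have h₁ := rpow_pos_of_pos hx (p + 1)
  have h₂ := rpow_pos_of_pos hx (p - 1)
  have h₃ := rpow_pos_of_pos hx (p - 3)
  rw [Rfun]
  nlinarith [mul_pos hc h₁, mul_neg_of_neg_of_pos hc' h₂, mul_pos hc h₃]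

theorem continuousOn_etafun (p a : ℝ) : ContinuousOn (etafun p a) (Ioi 0) :=
  continuousOn_of_forall_continuousAt fun x hx => by
    unfold etafun; fun_prop (disch := exact Or.inl (ne_of_gt hx))

theorem continuousOn_Rfun (p : ℝ) : ContinuousOn (Rfun p) (Ioi 0) :=
  continuousOn_of_forall_continuousAt fun x hx => by
    unfold Rfun; fun_prop (disch := exact Or.inl (ne_of_gt hx))

theorem integral_etafun_div_sqrt_Qfun_eq (hp : p ∈ Ioo 0 1) {β α : ℝ} (hβ : 0 < β)
    (hβα : β < α) (hQβ : Qfun p a β = 0) (hQα : Qfun p a α = 0)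
    (hQpos : ∀ x ∈ Ioo β α, 0 < Qfun p a x) :
    ∫ x in β..α, etafun p a x / √(Qfun p a x) = ∫ x in β..α, Rfun p x / √(Qfun p a x) := by
  have hsub : Icc β α ⊆ Ioi 0 := fun x hx => hβ.trans_le hx.1
  have hη := intervalIntegrable_div_sqrt_Qfun hp hβ hβα hQβ hQα hQpos
    ((continuousOn_etafun p a).mono hsub)
  have hR := intervalIntegrable_div_sqrt_Qfun hp hβ hβα hQβ hQα hQpos
    ((continuousOn_Rfun p).mono hsub)
  have hFTC : ∫ x in β..α, (etafun p a x - Rfun p x) / √(Qfun p a x) = 0 := by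
    rw [integral_eq_sub_of_hasDerivAt_of_le hβα.le
      (fun x hx => ((hasDerivAt_Gfun (hsub hx)).continuousAt.mul
        (hasDerivAt_Qfun (hsub hx)).continuousAt.sqrt).continuousWithinAt)
      (fun x hx => hasDerivAt_Gfun_mul_sqrt_Qfun (hβ.trans hx.1) (hQpos x hx))
      (by simpa only [sub_div] using hη.sub hR)]
    simp [hQβ, hQα]
  simp only [sub_div] at hFTC
  rwa [integral_sub hη hR, sub_eq_zero] at hFTC

end Antiderivative

theorem pElastic_unstable_general (p a : ℝ) (hp : p ∈ Set.Ioo (0 : ℝ) 1)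
    (β α : ℝ) (hβ : 0 < β) (hβα : β < α)
    (hQβ : Qfun p a β = 0) (hQα : Qfun p a α = 0)
    (hQpos : ∀ x ∈ Set.Ioo β α, 0 < Qfun p a x) :
    IntervalIntegrable (fun x => etafun p a x / Real.sqrt (Qfun p a x)) volume β α ∧
    (∫ x in β..α, etafun p a x / Real.sqrt (Qfun p a x)) < 0 ∧
    ∀ m : ℕ, 0 < m →
      2 * (m : ℝ) * ∫ x in β..α, etafun p a x / Real.sqrt (Qfun p a x) < 0 := by
  have hsub : Icc β α ⊆ Ioi 0 := fun x hx => hβ.trans_le hx.1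
  have hR := intervalIntegrable_div_sqrt_Qfun hp hβ hβα hQβ hQα hQpos
    ((continuousOn_Rfun p).mono hsub)
  have hΥ : ∫ x in β..α, etafun p a x / √(Qfun p a x) < 0 := by
    rw [integral_etafun_div_sqrt_Qfun_eq hp hβ hβα hQβ hQα hQpos, ← neg_pos,
      ← intervalIntegral.integral_neg]
    exact intervalIntegral_pos_of_pos_on hR.neg (fun x hx => neg_pos.2 (div_neg_of_neg_of_pos
      (Rfun_neg hp (hβ.trans hx.1)) (sqrt_pos.2 (hQpos x hx)))) hβα
  exact ⟨intervalIntegrable_div_sqrt_Qfun hp hβ hβα hQβ hQα hQpos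
    ((continuousOn_etafun p a).mono hsub), hΥ,
    fun m hm => mul_neg_of_pos_of_neg (by positivity) hΥ⟩

/-- **instability.** For `p ∈ (0,1)` and `a > a_*`, with `β < α` the two
positive roots of `Q_{p,a}`, the (absolutely convergent) improper integral
`Υ_p(a) = ∫_β^α η_{p,a}(x)/√(Q_{p,a}(x)) dx` is strictly negative.  Consequently every closed
`p`-elastic curve with non-constant curvature is unstable: the second variation of `Θ_p` in
the unit normal direction, `2m·Υ_p(a)` where `m` is the number of curvature periods, is
negative. -/
theorem pElastic_unstable (p a : ℝ) (hp : p ∈ Set.Ioo (0 : ℝ) 1)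
    (ha : p ^ p * (1 - p) ^ (1 - p) < a)
    (β α : ℝ) (hβ : 0 < β) (hβα : β < α)
    (hQβ : Qfun p a β = 0) (hQα : Qfun p a α = 0)
    (hQpos : ∀ x ∈ Set.Ioo β α, 0 < Qfun p a x) :
    IntervalIntegrable (fun x => etafun p a x / Real.sqrt (Qfun p a x)) volume β α ∧
    (∫ x in β..α, etafun p a x / Real.sqrt (Qfun p a x)) < 0 ∧
    ∀ m : ℕ, 0 < m →
      2 * (m : ℝ) * ∫ x in β..α, etafun p a x / Real.sqrt (Qfun p a x) < 0 :=
  pElastic_unstable_general p a hp β α hβ hβα hQβ hQα hQpos
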